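/- For an order bounded linear functional l on a Riesz space X, the kernel of l is a Grothendieck subspace if and only if |l| is a 2-disjoint operator, i.e., |l| is the sum of at most two Riesz homomorphisms. -/

import Mathlib

variable {X : Type*} [Lattice X] [AddCommGroup X]
  [CovariantClass X X (· + ·) (· ≤ ·)] [Module ℝ X] [PosSMulMono ℝ X]

/-- A Grothendieck subspace: closed under `x ⊔ y ⊔ 0 + x ⊓ y ⊓ 0`. -/
def IsGrothendieckSubspace (H : Submodule ℝ X) : Prop :=
  ∀ x ∈ H, ∀ y ∈ H, x ⊔ y ⊔ 0 + x ⊓ y ⊓ 0 ∈ H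

/-- A Riesz subspace: closed under the lattice operations. -/
def IsRieszSubspace (H : Submodule ℝ X) : Prop :=
  ∀ x ∈ H, ∀ y ∈ H, x ⊔ y ∈ H ∧ x ⊓ y ∈ H

/-- A Riesz homomorphism: a linear map preserving finite suprema. -/
def IsRieszHom (f : X →ₗ[ℝ] ℝ) : Prop :=
  ∀ x y : X, f (x ⊔ y) = f x ⊔ f y

/-- A positive linear functional. -/
def IsPositive (f : X →ₗ[ℝ] ℝ) : Prop :=
  ∀ x : X, 0 ≤ x → 0 ≤ f x

/-- `p` is the positive part of the order bounded functional `l`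
(so `l₋ = p - l` and `|l| = p + (p - l)`). -/
def IsPosPartOf (l p : X →ₗ[ℝ] ℝ) : Prop :=
  IsPositive p ∧ IsPositive (p - l) ∧
    ∀ x : X, 0 ≤ x → p x = sSup {r : ℝ | ∃ y : X, 0 ≤ y ∧ y ≤ x ∧ l y = r}

/-!
Write `p = l⁺`, so that `l⁻ = p - l` and `|l| = p + (p - l)`.

If `|l| = f + g` with Riesz homomorphisms `f`, `g`, then `ker f ⊓ ker g ≤ ker l`, hence
`l = α • f + β • g`. On the kernel of such an `l` the values of `g` are a fixed multiple of
those of `f`, and `f`, `g` both turn `x ⊔ y ⊔ 0 + x ⊓ y ⊓ 0` into the same expression in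
their values, which is homogeneous; so the kernel is a Grothendieck subspace.

Conversely, testing the Grothendieck condition on differences of normalised positive elements
shows two things. If `l` is negative somewhere on the positive cone, it cannot be positive on
two disjoint elements, so `l⁺` is a Riesz homomorphism (and symmetrically `l⁻`). A positive `L`
with Grothendieck kernel cannot charge three pairwise disjoint elements; if it charges two
disjoint `a` and `b`, it is the sum of its parts `x ↦ ⨆ s, L (x ⊓ s • a)` and
`x ↦ ⨆ s, L (x ⊓ s • b)` on the bands they generate, which are Riesz homomorphisms. These
parts exhaust `L` because the residue `(x - n • (a + b))⁺` would otherwise lose a fixed amount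
of mass at every step.
-/

open scoped NNReal

lemma LinearMap.apply_inv_smul_self {K M : Type*} [Field K] [AddCommGroup M] [Module K M]
    (l : M →ₗ[K] K) {u : M} (h : l u ≠ 0) : l ((l u)⁻¹ • u) = 1 := by
  rw [map_smul, smul_eq_mul, inv_mul_cancel₀ h]

lemma inf_eq_zero_of_le_of_le {α : Type*} [Lattice α] [Zero α] {a b a' b' : α} (ha' : 0 ≤ a')
    (hb' : 0 ≤ b') (haa : a' ≤ a) (hbb : b' ≤ b) (hab : a ⊓ b = 0) : a' ⊓ b' = 0 :=
  le_antisymm ((inf_le_inf haa hbb).trans hab.le) (le_inf ha' hb')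

section LatticeOrderedGroup

variable {α : Type*} [Lattice α] [AddCommGroup α] [AddLeftMono α]

lemma add_inf_le_add_inf {a b c : α} (ha : 0 ≤ a) (hb : 0 ≤ b) (hc : 0 ≤ c) :
    (a + b) ⊓ c ≤ a ⊓ c + b ⊓ c := by
  rw [add_inf, inf_add, inf_add]
  refine le_inf (le_inf inf_le_left ?_) (le_inf ?_ ?_)
  · exact inf_le_right.trans (le_add_of_nonneg_right hb)
  · exact inf_le_right.trans (le_add_of_nonneg_left ha)
  · exact inf_le_right.trans (le_add_of_nonneg_right hc)

lemma sup_inf_le_add_inf {a b c : α} (ha : 0 ≤ a) (hb : 0 ≤ b) (hc : 0 ≤ c) :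
    (a ⊔ b) ⊓ c ≤ a ⊓ c + b ⊓ c :=
  (inf_le_inf_right c (sup_le (le_add_of_nonneg_right hb) (le_add_of_nonneg_left ha))).trans
    (add_inf_le_add_inf ha hb hc)

lemma add_eq_sup_of_inf_eq_zero {a b : α} (hab : a ⊓ b = 0) : a + b = a ⊔ b := by
  rw [← inf_add_sup, hab, zero_add]

lemma posPart_sub_eq_sub_inf (a b : α) : (a - b)⁺ = a - a ⊓ b := by
  rw [inf_eq_sub_posPart_sub, sub_sub_cancel]

lemma sub_inf_zero (a b : α) : (a - b) ⊓ 0 = a ⊓ b - b := by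
  rw [inf_sub, sub_self]

lemma posPart_sub_posPart_sub_eq_inf (a : α) {c : α} (hc : 0 ≤ c) :
    a⁺ - (a - c)⁺ = a⁺ ⊓ c := by
  have h : (a - c)⁺ = (a⁺ - c)⁺ := by
    rw [posPart_def, posPart_def, posPart_def, sup_sub, zero_sub, sup_assoc,
      sup_eq_right.mpr (neg_nonpos.mpr hc)]
  rw [h, inf_eq_sub_posPart_sub]

end LatticeOrderedGroup

section OrderedModule

variable {E : Type*} [Lattice E] [AddCommGroup E] [Module ℝ E]

lemma smul_inf_of_nonneg [PosSMulMono ℝ E] {t : ℝ} (ht : 0 ≤ t) (x y : E) :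
    t • (x ⊓ y) = t • x ⊓ t • y := by
  rcases ht.eq_or_lt with rfl | ht
  · simp
  · exact (OrderIso.smulRight ht).map_inf x y

lemma LinearMap.ext_of_nonneg [AddLeftMono E] {F G : E →ₗ[ℝ] ℝ}
    (h : ∀ x, 0 ≤ x → F x = G x) : F = G := by
  ext x
  rw [← posPart_sub_negPart x, map_sub, map_sub, h _ (posPart_nonneg x), h _ (negPart_nonneg x)]

variable [AddLeftMono E] [PosSMulMono ℝ E]

lemma smul_le_smul_of_le_of_nonneg {s t : ℝ} (hst : s ≤ t) {x : E} (hx : 0 ≤ x) :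
    s • x ≤ t • x := by
  have h := smul_nonneg (sub_nonneg.mpr hst) hx
  rwa [sub_smul, sub_nonneg] at h

lemma smul_inf_smul_le {s t K : ℝ} (hs : 0 ≤ s) (hsK : s ≤ K) (htK : t ≤ K)
    {u w : E} (hu : 0 ≤ u) (hw : 0 ≤ w) : s • u ⊓ t • w ≤ K • (u ⊓ w) := by
  rw [smul_inf_of_nonneg (hs.trans hsK)]
  exact inf_le_inf (smul_le_smul_of_le_of_nonneg hsK hu) (smul_le_smul_of_le_of_nonneg htK hw)

lemma smul_inf_smul_eq_zero {s t : ℝ} (hs : 0 ≤ s) (ht : 0 ≤ t) {u w : E} (hu : 0 ≤ u)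
    (hw : 0 ≤ w) (huw : u ⊓ w = 0) : s • u ⊓ t • w = 0 :=
  le_antisymm (by simpa [huw] using smul_inf_smul_le hs (le_max_left s t) (le_max_right s t) hu hw)
    (le_inf (smul_nonneg hs hu) (smul_nonneg ht hw))

lemma exists_linearMap_eq_of_nonneg (φ : E → ℝ)
    (hadd : ∀ x y, 0 ≤ x → 0 ≤ y → φ (x + y) = φ x + φ y)
    (hsmul : ∀ (t : ℝ) x, 0 < t → 0 ≤ x → φ (t • x) = t * φ x) :
    ∃ F : E →ₗ[ℝ] ℝ, ∀ x, 0 ≤ x → F x = φ x := by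
  have hφ0 : φ 0 = 0 := by simpa using hadd 0 0 le_rfl le_rfl
  have hdiff : ∀ x u v, 0 ≤ u → 0 ≤ v → x = u - v → φ x⁺ - φ x⁻ = φ u - φ v := by
    intro x u v hu hv hx
    have h : φ (x⁺ + v) = φ (u + x⁻) := by
      congr 1
      rw [← sub_eq_sub_iff_add_eq_add, posPart_sub_negPart, hx]
    rw [hadd _ _ (posPart_nonneg x) hv, hadd _ _ hu (negPart_nonneg x)] at h
    linarith
  refine ⟨{ toFun := fun x => φ x⁺ - φ x⁻, map_add' := ?_, map_smul' := ?_ }, ?_⟩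
  · intro x y
    rw [hdiff (x + y) (x⁺ + y⁺) (x⁻ + y⁻) (add_nonneg (posPart_nonneg x) (posPart_nonneg y))
      (add_nonneg (negPart_nonneg x) (negPart_nonneg y)) (by
        rw [add_sub_add_comm, posPart_sub_negPart, posPart_sub_negPart]),
      hadd _ _ (posPart_nonneg x) (posPart_nonneg y),
      hadd _ _ (negPart_nonneg x) (negPart_nonneg y)]
    ring
  · intro t x
    simp only [RingHom.id_apply, smul_eq_mul]
    rcases lt_trichotomy t 0 with ht | rfl | ht
    · have ht' : 0 < -t := neg_pos.mpr ht
      rw [hdiff (t • x) ((-t) • x⁻) ((-t) • x⁺) (smul_nonneg ht'.le (negPart_nonneg x))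
        (smul_nonneg ht'.le (posPart_nonneg x)) (by
          rw [← smul_sub, neg_smul, ← smul_neg, neg_sub, posPart_sub_negPart]),
        hsmul _ _ ht' (negPart_nonneg x), hsmul _ _ ht' (posPart_nonneg x)]
      ring
    · simp [hφ0]
    · rw [hdiff (t • x) (t • x⁺) (t • x⁻) (smul_nonneg ht.le (posPart_nonneg x))
        (smul_nonneg ht.le (negPart_nonneg x)) (by rw [← smul_sub, posPart_sub_negPart]),
        hsmul _ _ ht (posPart_nonneg x), hsmul _ _ ht (negPart_nonneg x)]
      ring
  · intro x hx
    simp [posPart_eq_self.mpr hx, negPart_eq_zero.mpr hx, hφ0]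

end OrderedModule

section Functionals

variable {E : Type*} [Lattice E] [AddCommGroup E] [Module ℝ E] {l f L : E →ₗ[ℝ] ℝ}

lemma IsGrothendieckSubspace.apply_sup_add_apply_inf
    (hG : IsGrothendieckSubspace (LinearMap.ker l)) {x y : E} (hx : l x = 0) (hy : l y = 0) :
    l (x ⊔ y ⊔ 0) + l (x ⊓ y ⊓ 0) = 0 := by
  simpa using hG x hx y hy

variable [AddLeftMono E]

lemma IsPositive.monotone (hL : IsPositive L) : Monotone L := fun x y hxy => by
  have h := hL (y - x) (sub_nonneg.mpr hxy)
  rwa [map_sub, sub_nonneg] at h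

lemma IsRieszHom.map_inf (hf : IsRieszHom f) (x y : E) : f (x ⊓ y) = f x ⊓ f y := by
  have h := congrArg f (inf_add_sup x y)
  rw [map_add, map_add, hf, ← inf_add_sup (f x) (f y)] at h
  linarith

lemma IsPositive.isRieszHom_of_inf_eq_zero (hL : IsPositive L)
    (h : ∀ u v, 0 ≤ u → 0 ≤ v → u ⊓ v = 0 → L u = 0 ∨ L v = 0) : IsRieszHom L := by
  intro x y
  have hx : 0 ≤ x ⊔ y - x := sub_nonneg.mpr le_sup_left
  have hy : 0 ≤ x ⊔ y - y := sub_nonneg.mpr le_sup_right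
  have hxy : (x ⊔ y - x) ⊓ (x ⊔ y - y) = 0 := by rw [← sub_sup, sub_self]
  have hLx := hL.monotone (le_sup_left : x ≤ x ⊔ y)
  have hLy := hL.monotone (le_sup_right : y ≤ x ⊔ y)
  rcases h _ _ hx hy hxy with h | h <;> rw [map_sub, sub_eq_zero] at h
  · rw [h, sup_eq_left.mpr (h ▸ hLy)]
  · rw [h, sup_eq_right.mpr (h ▸ hLx)]

lemma IsGrothendieckSubspace.apply_inf_eq (hG : IsGrothendieckSubspace (LinearMap.ker l))
    {u v w : E} (hu : 0 ≤ u) (hv : 0 ≤ v) (hw : 0 ≤ w) (hlv : l v = l u) (hlw : l w = -l u) :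
    l (u ⊓ v) = l u := by
  have key := hG.apply_sup_add_apply_inf (x := u - v) (y := u + w)
    (by rw [map_sub, hlv, sub_self]) (by rw [map_add, hlw, add_neg_cancel])
  have hle : u - v ≤ u + w := by
    rw [sub_eq_add_neg]; exact add_le_add_right ((neg_nonpos.mpr hv).trans hw) u
  rw [sup_eq_right.mpr hle, inf_eq_left.mpr hle, sup_eq_left.mpr (add_nonneg hu hw),
    sub_inf_zero] at key
  simp only [map_add, map_sub, hlw, hlv] at key
  linarith

lemma IsGrothendieckSubspace.apply_le_apply_inf_add (hL : IsPositive L)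
    (hG : IsGrothendieckSubspace (LinearMap.ker L)) {u v w : E} (hu : 0 ≤ u) (hv : 0 ≤ v)
    (hw : 0 ≤ w) (hLu : L u = L v) (hLw : L w = L v) :
    L v ≤ L (u ⊓ w) + L (u ⊓ v) + L (w ⊓ v) := by
  have key := hG.apply_sup_add_apply_inf (x := u - v) (y := w - v)
    (by rw [map_sub, hLu, sub_self]) (by rw [map_sub, hLw, sub_self])
  rw [← sup_sub, ← inf_sub, ← posPart_def, posPart_sub_eq_sub_inf, sub_inf_zero] at key
  have hsup : L (u ⊔ w) = L u + L w - L (u ⊓ w) := by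
    rw [eq_sub_iff_add_eq', ← map_add, ← map_add, inf_add_sup]
  have h1 := hL.monotone (sup_inf_le_add_inf hu hw hv)
  have h2 := hL _ (le_inf (le_inf hu hw) hv)
  simp only [map_add, map_sub] at key h1
  linarith

variable [PosSMulMono ℝ E]

lemma IsGrothendieckSubspace.apply_nonpos_or_apply_nonpos
    (hG : IsGrothendieckSubspace (LinearMap.ker l)) {u v w : E} (hu : 0 ≤ u) (hv : 0 ≤ v)
    (hw : 0 ≤ w) (huv : u ⊓ v = 0) (hlw : l w < 0) : l u ≤ 0 ∨ l v ≤ 0 := by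
  by_contra! h
  obtain ⟨hlu, hlv⟩ := h
  have hu' := smul_nonneg (inv_nonneg.mpr hlu.le) hu
  have hv' := smul_nonneg (inv_nonneg.mpr hlv.le) hv
  have key := hG.apply_inf_eq hu' hv' (smul_nonneg (inv_nonneg.mpr (neg_nonneg.mpr hlw.le)) hw)
    (by rw [l.apply_inv_smul_self hlu.ne', l.apply_inv_smul_self hlv.ne'])
    (by rw [l.apply_inv_smul_self hlu.ne', map_smul, smul_eq_mul, inv_mul_eq_div, div_neg,
      div_self hlw.ne])
  rw [smul_inf_smul_eq_zero (inv_nonneg.mpr hlu.le) (inv_nonneg.mpr hlv.le) hu hv huv, map_zero,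
    l.apply_inv_smul_self hlu.ne'] at key
  exact zero_ne_one key

lemma IsGrothendieckSubspace.one_le_mul_apply_inf_add (hL : IsPositive L)
    (hG : IsGrothendieckSubspace (LinearMap.ker L)) {u v w : E} (hu : 0 ≤ u) (hv : 0 ≤ v)
    (hw : 0 ≤ w) (huv : u ⊓ v = 0) (hLu : 0 < L u) (hLv : 0 < L v) (hLw : 0 < L w) {K : ℝ}
    (hKu : (L u)⁻¹ ≤ K) (hKv : (L v)⁻¹ ≤ K) (hKw : (L w)⁻¹ ≤ K) :
    1 ≤ K * (L (u ⊓ w) + L (v ⊓ w)) := by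
  have core := hG.apply_le_apply_inf_add hL (smul_nonneg (inv_nonneg.mpr hLu.le) hu)
    (smul_nonneg (inv_nonneg.mpr hLv.le) hv) (smul_nonneg (inv_nonneg.mpr hLw.le) hw)
    (by rw [L.apply_inv_smul_self hLu.ne', L.apply_inv_smul_self hLv.ne'])
    (by rw [L.apply_inv_smul_self hLw.ne', L.apply_inv_smul_self hLv.ne'])
  rw [L.apply_inv_smul_self hLv.ne', smul_inf_smul_eq_zero (inv_nonneg.mpr hLu.le)
    (inv_nonneg.mpr hLv.le) hu hv huv, map_zero, inf_comm ((L w)⁻¹ • w)] at core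
  have h1 := hL.monotone (smul_inf_smul_le (inv_nonneg.mpr hLu.le) hKu hKw hu hw)
  have h2 := hL.monotone (smul_inf_smul_le (inv_nonneg.mpr hLv.le) hKv hKw hv hw)
  rw [map_smul, smul_eq_mul] at h1 h2
  linarith

lemma IsGrothendieckSubspace.exists_apply_posPart_sub_lt (hL : IsPositive L)
    (hG : IsGrothendieckSubspace (LinearMap.ker L)) {a b : E} (ha : 0 ≤ a) (hb : 0 ≤ b)
    (hab : a ⊓ b = 0) (hLa : 0 < L a) (hLb : 0 < L b) {x : E} (hx : 0 ≤ x) {ε : ℝ}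
    (hε : 0 < ε) : ∃ n : ℕ, L (x - (n : ℝ) • (a + b))⁺ < ε := by
  by_contra! h
  have hc : 0 ≤ a + b := add_nonneg ha hb
  set K := max (L a)⁻¹ (max (L b)⁻¹ ε⁻¹)
  have hK : 0 < K := (inv_pos.mpr hLa).trans_le (le_max_left _ _)
  have hstep : ∀ n : ℕ, L (x - ((n + 1 : ℕ) : ℝ) • (a + b))⁺ + 1 / (2 * K) ≤
      L (x - (n : ℝ) • (a + b))⁺ := by
    intro n
    set r := (x - (n : ℝ) • (a + b))⁺
    have hmass : 1 ≤ K * (L (a ⊓ r) + L (b ⊓ r)) :=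
      hG.one_le_mul_apply_inf_add hL ha hb (posPart_nonneg _) hab hLa hLb (hε.trans_le (h n))
        (le_max_left _ _) ((le_max_left _ _).trans (le_max_right _ _))
        ((inv_anti₀ hε (h n)).trans ((le_max_right _ _).trans (le_max_right _ _)))
    have hra := hL.monotone (inf_le_inf_right r (le_add_of_nonneg_right hb : a ≤ a + b))
    have hrb := hL.monotone (inf_le_inf_right r (le_add_of_nonneg_left ha : b ≤ a + b))
    have hdiff : r - (x - ((n + 1 : ℕ) : ℝ) • (a + b))⁺ = (a + b) ⊓ r := by
      rw [inf_comm, ← posPart_sub_posPart_sub_eq_inf _ hc, Nat.cast_succ, add_smul, one_smul,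
        sub_add_eq_sub_sub]
    have hLdiff := congrArg L hdiff
    rw [map_sub] at hLdiff
    have hgain : 1 / (2 * K) ≤ L ((a + b) ⊓ r) := by
      rw [div_le_iff₀ (by positivity)]
      nlinarith
    linarith
  have hdecay : ∀ n : ℕ, L (x - (n : ℝ) • (a + b))⁺ + n * (1 / (2 * K)) ≤ L x := by
    intro n
    induction n with
    | zero => simp [posPart_eq_self.mpr hx]
    | succ n ih => have := hstep n; push_cast at this ⊢; linarith
  obtain ⟨n, hn⟩ := exists_nat_gt (2 * K * L x)
  have hlarge : L x < n * (1 / (2 * K)) := by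
    rw [mul_one_div, lt_div_iff₀ (by positivity)]
    linarith
  linarith [hdecay n, h n]

end Functionals

section BandPart

variable {E : Type*} [Lattice E] [AddCommGroup E] [Module ℝ E] {L : E →ₗ[ℝ] ℝ} {a b : E}

/-- For `x ≥ 0` this is `L` applied to the projection of `x` onto the band generated by `a`,
whenever that projection exists. -/
noncomputable def bandPart (L : E →ₗ[ℝ] ℝ) (a x : E) : ℝ :=
  ⨆ s : ℝ≥0, L (x ⊓ (s : ℝ) • a)

lemma bandPart_smul [PosSMulMono ℝ E] (a : E) {t : ℝ} (ht : 0 < t) (x : E) :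
    bandPart L a (t • x) = t * bandPart L a x := by
  lift t to ℝ≥0 using ht.le
  rw [bandPart, bandPart, Real.mul_iSup_of_nonneg t.coe_nonneg,
    ← (Equiv.mulLeft₀ t (mod_cast ht.ne')).iSup_comp
      (g := fun s : ℝ≥0 => L ((t : ℝ) • x ⊓ (s : ℝ) • a))]
  congr 1
  ext s
  change L ((t : ℝ) • x ⊓ ((t * s : ℝ≥0) : ℝ) • a) = _
  rw [NNReal.coe_mul, mul_smul, ← smul_inf_of_nonneg t.coe_nonneg, map_smul, smul_eq_mul]

variable [AddLeftMono E]

lemma le_bandPart (hL : IsPositive L) (a x : E) (s : ℝ≥0) :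
    L (x ⊓ (s : ℝ) • a) ≤ bandPart L a x :=
  le_ciSup (f := fun s : ℝ≥0 => L (x ⊓ (s : ℝ) • a))
    ⟨L x, by rintro _ ⟨t, rfl⟩; exact hL.monotone inf_le_left⟩ s

lemma bandPart_nonneg (hL : IsPositive L) (a : E) {x : E} (hx : 0 ≤ x) :
    0 ≤ bandPart L a x := by
  simpa [inf_eq_right.mpr hx] using le_bandPart hL a x 0

variable [PosSMulMono ℝ E]

lemma bandPart_add (hL : IsPositive L) {a x y : E} (ha : 0 ≤ a) (hx : 0 ≤ x) (hy : 0 ≤ y) :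
    bandPart L a (x + y) = bandPart L a x + bandPart L a y := by
  refine le_antisymm (ciSup_le fun s => ?_) (ciSup_add_ciSup_le fun s t => ?_)
  · have h := hL.monotone (add_inf_le_add_inf hx hy (smul_nonneg s.coe_nonneg ha))
    rw [map_add] at h
    exact h.trans (add_le_add (le_bandPart hL a x s) (le_bandPart hL a y s))
  · set m := max s t
    have hsum :
        x ⊓ (m : ℝ) • a + y ⊓ (m : ℝ) • a ≤ (x + y) ⊓ ((m + m : ℝ≥0) : ℝ) • a := by
      rw [NNReal.coe_add, add_smul]
      exact le_inf (add_le_add inf_le_left inf_le_left) (add_le_add inf_le_right inf_le_right)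
    calc L (x ⊓ (s : ℝ) • a) + L (y ⊓ (t : ℝ) • a)
        ≤ L (x ⊓ (m : ℝ) • a) + L (y ⊓ (m : ℝ) • a) := add_le_add
          (hL.monotone (inf_le_inf_left x (smul_le_smul_of_le_of_nonneg (le_max_left s t) ha)))
          (hL.monotone (inf_le_inf_left y (smul_le_smul_of_le_of_nonneg (le_max_right s t) ha)))
      _ ≤ L ((x + y) ⊓ ((m + m : ℝ≥0) : ℝ) • a) := by
          rw [← map_add]; exact hL.monotone hsum
      _ ≤ bandPart L a (x + y) := le_bandPart hL a (x + y) (m + m)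

lemma IsGrothendieckSubspace.bandPart_add_bandPart (hL : IsPositive L)
    (hG : IsGrothendieckSubspace (LinearMap.ker L)) (ha : 0 ≤ a) (hb : 0 ≤ b)
    (hab : a ⊓ b = 0) (hLa : 0 < L a) (hLb : 0 < L b) {x : E} (hx : 0 ≤ x) :
    bandPart L a x + bandPart L b x = L x := by
  refine le_antisymm (ciSup_add_ciSup_le fun s t => ?_) (le_of_forall_pos_lt_add fun ε hε => ?_)
  · have hst := inf_eq_zero_of_le_of_le (le_inf hx (smul_nonneg s.coe_nonneg ha))
      (le_inf hx (smul_nonneg t.coe_nonneg hb)) inf_le_right inf_le_right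
      (smul_inf_smul_eq_zero s.coe_nonneg t.coe_nonneg ha hb hab)
    rw [← map_add, add_eq_sup_of_inf_eq_zero hst]
    exact hL.monotone (sup_le inf_le_left inf_le_left)
  · obtain ⟨n, hn⟩ := hG.exists_apply_posPart_sub_lt hL ha hb hab hLa hLb hx hε
    have hsplit := hL.monotone (add_inf_le_add_inf (smul_nonneg (Nat.cast_nonneg (α := ℝ) n) ha)
      (smul_nonneg (Nat.cast_nonneg (α := ℝ) n) hb) hx)
    rw [← smul_add, inf_comm, inf_comm _ x, inf_comm _ x, map_add] at hsplit
    have hna := le_bandPart hL a x n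
    have hnb := le_bandPart hL b x n
    rw [NNReal.coe_natCast] at hna hnb
    rw [posPart_sub_eq_sub_inf, map_sub] at hn
    linarith

lemma IsGrothendieckSubspace.isRieszHom_of_eq_bandPart (hL : IsPositive L)
    (hG : IsGrothendieckSubspace (LinearMap.ker L)) (ha : 0 ≤ a) (hb : 0 ≤ b)
    (hab : a ⊓ b = 0) (hLb : 0 < L b) {F : E →ₗ[ℝ] ℝ} (hF : ∀ x, 0 ≤ x → F x = bandPart L a x) :
    IsRieszHom F := by
  refine IsPositive.isRieszHom_of_inf_eq_zero (fun x hx => hF x hx ▸ bandPart_nonneg hL a hx)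
    fun u v hu hv huv => ?_
  rw [hF u hu, hF v hv]
  by_contra! h
  obtain ⟨s, hs⟩ := exists_lt_of_lt_ciSup ((bandPart_nonneg hL a hu).lt_of_ne' h.1)
  obtain ⟨t, ht⟩ := exists_lt_of_lt_ciSup ((bandPart_nonneg hL a hv).lt_of_ne' h.2)
  have hy := le_inf hu (smul_nonneg s.coe_nonneg ha)
  have hz := le_inf hv (smul_nonneg t.coe_nonneg ha)
  have hb' : ∀ r : ℝ≥0, (r : ℝ) • a ⊓ b = 0 := fun r => by
    simpa using smul_inf_smul_eq_zero r.coe_nonneg zero_le_one ha hb hab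
  have key := hG.one_le_mul_apply_inf_add hL hy hz hb
    (inf_eq_zero_of_le_of_le hy hz inf_le_left inf_le_left huv) hs ht hLb
    (le_max_left _ _) ((le_max_left _ _).trans (le_max_right _ _))
    ((le_max_right _ _).trans (le_max_right _ _))
  rw [inf_eq_zero_of_le_of_le hy hb inf_le_right le_rfl (hb' s),
    inf_eq_zero_of_le_of_le hz hb inf_le_right le_rfl (hb' t), map_zero, add_zero, mul_zero] at key
  norm_num at key

theorem IsPositive.exists_isRieszHom_add (hL : IsPositive L)
    (hG : IsGrothendieckSubspace (LinearMap.ker L)) :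
    ∃ f g : E →ₗ[ℝ] ℝ, IsRieszHom f ∧ IsRieszHom g ∧ L = f + g := by
  by_cases hcarriers : ∃ a b : E, 0 ≤ a ∧ 0 ≤ b ∧ a ⊓ b = 0 ∧ 0 < L a ∧ 0 < L b
  · obtain ⟨a, b, ha, hb, hab, hLa, hLb⟩ := hcarriers
    have hpart : ∀ c : E, 0 ≤ c → ∃ F : E →ₗ[ℝ] ℝ, ∀ x, 0 ≤ x → F x = bandPart L c x :=
      fun c hc => exists_linearMap_eq_of_nonneg (bandPart L c)
        (fun x y hx hy => bandPart_add hL hc hx hy) (fun t x ht _ => bandPart_smul c ht x)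
    obtain ⟨f, hf⟩ := hpart a ha
    obtain ⟨g, hg⟩ := hpart b hb
    refine ⟨f, g, hG.isRieszHom_of_eq_bandPart hL ha hb hab hLb hf,
      hG.isRieszHom_of_eq_bandPart hL hb ha (inf_comm a b ▸ hab) hLa hg,
      LinearMap.ext_of_nonneg fun x hx => ?_⟩
    rw [LinearMap.add_apply, hf x hx, hg x hx, hG.bandPart_add_bandPart hL ha hb hab hLa hLb hx]
  · push Not at hcarriers
    refine ⟨L, 0, hL.isRieszHom_of_inf_eq_zero fun u v hu hv huv => ?_, fun _ _ => by simp,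
      (add_zero L).symm⟩
    by_contra! h
    exact (hcarriers u v hu hv huv ((hL u hu).lt_of_ne' h.1)).not_gt ((hL v hv).lt_of_ne' h.2)

end BandPart

namespace IsPosPartOf

variable {E : Type*} [Lattice E] [AddCommGroup E] [Module ℝ E] {l p : E →ₗ[ℝ] ℝ}

lemma exists_lt_apply (hp : IsPosPartOf l p) {x : E} (hx : 0 ≤ x) {r : ℝ} (hr : r < p x) :
    ∃ y, 0 ≤ y ∧ y ≤ x ∧ r < l y := by
  have hne : {r : ℝ | ∃ y, 0 ≤ y ∧ y ≤ x ∧ l y = r}.Nonempty :=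
    ⟨0, 0, le_rfl, hx, map_zero l⟩
  rw [hp.2.2 x hx] at hr
  obtain ⟨_, ⟨y, hy, hyx, rfl⟩, hry⟩ := exists_lt_of_lt_csSup hne hr
  exact ⟨y, hy, hyx, hry⟩

variable [AddLeftMono E]

lemma apply_le (hp : IsPosPartOf l p) {x y : E} (hy : 0 ≤ y) (hyx : y ≤ x) : l y ≤ p x := by
  have h := hp.2.1 y hy
  rw [LinearMap.sub_apply, sub_nonneg] at h
  exact h.trans (hp.1.monotone hyx)

/-- Reflecting `y ↦ x - y` on `[0, x]` turns the values of `l` into those of `-l`, shifted by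
`l x`. -/
lemma neg (hp : IsPosPartOf l p) : IsPosPartOf (-l) (p - l) := by
  refine ⟨hp.2.1, by simpa using hp.1, fun x hx => ?_⟩
  have hne : {r : ℝ | ∃ y, 0 ≤ y ∧ y ≤ x ∧ (-l) y = r}.Nonempty :=
    ⟨0, 0, le_rfl, hx, map_zero _⟩
  refine (IsLUB.csSup_eq ⟨?_, fun b hb => le_of_forall_lt fun r hr => ?_⟩ hne).symm
  · rintro _ ⟨y, hy, hyx, rfl⟩
    have := hp.apply_le (sub_nonneg.mpr hyx) (sub_le_self x hy)
    simp only [LinearMap.neg_apply, LinearMap.sub_apply, map_sub] at this ⊢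
    linarith
  · obtain ⟨y, hy, hyx, hry⟩ := hp.exists_lt_apply hx (r := r + l x)
      (by rw [LinearMap.sub_apply] at hr; linarith)
    have := hb ⟨x - y, sub_nonneg.mpr hyx, sub_le_self x hy, rfl⟩
    simp only [LinearMap.neg_apply, map_sub] at this
    linarith

lemma eq_of_isPositive (hp : IsPosPartOf l p) (hl : IsPositive l) : p = l :=
  LinearMap.ext_of_nonneg fun x hx => le_antisymm
    (not_lt.mp fun h => by
      obtain ⟨y, -, hyx, hly⟩ := hp.exists_lt_apply hx h
      exact (hl.monotone hyx).not_gt hly)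
    (hp.apply_le hx le_rfl)

lemma isRieszHom [PosSMulMono ℝ E] (hp : IsPosPartOf l p)
    (hG : IsGrothendieckSubspace (LinearMap.ker l)) {w : E} (hw : 0 ≤ w) (hlw : l w < 0) :
    IsRieszHom p := by
  refine hp.1.isRieszHom_of_inf_eq_zero fun u v hu hv huv => ?_
  by_contra! h
  obtain ⟨u', hu', hu'u, hlu'⟩ := hp.exists_lt_apply hu ((hp.1 u hu).lt_of_ne' h.1)
  obtain ⟨v', hv', hv'v, hlv'⟩ := hp.exists_lt_apply hv ((hp.1 v hv).lt_of_ne' h.2)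
  rcases hG.apply_nonpos_or_apply_nonpos hu' hv' hw
    (inf_eq_zero_of_le_of_le hu' hv' hu'u hv'v huv) hlw with h | h <;> linarith

/-- On the positive cone `|l| x = 0` forces `l⁺ x = l⁻ x = 0`, and a Riesz homomorphism vanishing
at `z` vanishes at `z⁺` and `z⁻`. -/
lemma ker_inf_ker_le_ker (hp : IsPosPartOf l p) {f g : E →ₗ[ℝ] ℝ} (hf : IsRieszHom f)
    (hg : IsRieszHom g) (hfg : p + (p - l) = f + g) :
    LinearMap.ker f ⊓ LinearMap.ker g ≤ LinearMap.ker l := by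
  have hcone : ∀ w, 0 ≤ w → f w = 0 → g w = 0 → l w = 0 := by
    intro w hw hfw hgw
    have h := LinearMap.congr_fun hfg w
    have h1 := hp.1 w hw
    have h2 := hp.2.1 w hw
    simp only [LinearMap.add_apply, LinearMap.sub_apply, hfw, hgw] at h h2
    linarith
  have hposPart : ∀ F : E →ₗ[ℝ] ℝ, IsRieszHom F → ∀ z, F z = 0 → F z⁺ = 0 := by
    intro F hF z hz
    rw [posPart_def, hF, map_zero, hz, sup_idem]
  rintro z ⟨hfz, hgz⟩
  rw [SetLike.mem_coe, LinearMap.mem_ker] at hfz hgz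
  have hfz' : f (-z) = 0 := by rw [map_neg, hfz, neg_zero]
  have hgz' : g (-z) = 0 := by rw [map_neg, hgz, neg_zero]
  rw [LinearMap.mem_ker, ← posPart_sub_negPart z, map_sub, ← posPart_neg,
    hcone _ (posPart_nonneg z) (hposPart f hf z hfz) (hposPart g hg z hgz),
    hcone _ (posPart_nonneg _) (hposPart f hf _ hfz') (hposPart g hg _ hgz'), sub_zero]

end IsPosPartOf

lemma sup_sup_zero_add_inf_inf_zero_mul (c a b : ℝ) :
    c * a ⊔ c * b ⊔ 0 + c * a ⊓ c * b ⊓ 0 = c * (a ⊔ b ⊔ 0 + a ⊓ b ⊓ 0) := by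
  rcases le_total 0 c with hc | hc
  · rw [mul_add, mul_max_of_nonneg _ _ hc, mul_max_of_nonneg _ _ hc, mul_min_of_nonneg _ _ hc,
      mul_min_of_nonneg _ _ hc, mul_zero]
  · have hmax := smul_max_of_nonpos (β := ℝ) hc
    have hmin := smul_min_of_nonpos (β := ℝ) hc
    simp only [smul_eq_mul] at hmax hmin
    rw [mul_add, hmax, hmax, hmin, hmin, mul_zero, add_comm]

section Combination

variable {E : Type*} [Lattice E] [AddCommGroup E] [AddLeftMono E] [Module ℝ E]
  {f g : E →ₗ[ℝ] ℝ}

lemma IsRieszHom.isGrothendieckSubspace_ker_smul_add_smul (hf : IsRieszHom f) (hg : IsRieszHom g)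
    (α β : ℝ) : IsGrothendieckSubspace (LinearMap.ker (α • f + β • g)) := by
  intro x hx y hy
  simp only [LinearMap.mem_ker, LinearMap.add_apply, LinearMap.smul_apply, smul_eq_mul,
    map_add, hf _, hg _, hf.map_inf, hg.map_inf, map_zero] at hx hy ⊢
  by_cases hβ : β = 0
  · subst hβ
    rcases eq_or_ne α 0 with rfl | hα
    · simp
    · simp only [zero_mul, add_zero, mul_eq_zero, hα, false_or] at hx hy ⊢
      simp [hx, hy]
  · have hgx : g x = -α / β * f x := by field_simp; linarith
    have hgy : g y = -α / β * f y := by field_simp; linarith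
    have hβ' : β * (-α / β) = -α := by field_simp
    rw [hgx, hgy]
    linear_combination β * sup_sup_zero_add_inf_inf_zero_mul (-α / β) (f x) (f y) +
      (f x ⊔ f y ⊔ 0 + f x ⊓ f y ⊓ 0) * hβ'

end Combination

section Kernel

variable {E : Type*} [Lattice E] [AddCommGroup E] [AddLeftMono E] [Module ℝ E]
  {l p : E →ₗ[ℝ] ℝ}

theorem IsPosPartOf.exists_isRieszHom_of_isGrothendieckSubspace [PosSMulMono ℝ E]
    (hp : IsPosPartOf l p) (hG : IsGrothendieckSubspace (LinearMap.ker l)) :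
    ∃ f g : E →ₗ[ℝ] ℝ, IsRieszHom f ∧ IsRieszHom g ∧ p + (p - l) = f + g := by
  have hG' : IsGrothendieckSubspace (LinearMap.ker (-l)) := by rwa [LinearMap.ker_neg]
  by_cases hneg : ∃ w, 0 ≤ w ∧ l w < 0
  · obtain ⟨w, hw, hlw⟩ := hneg
    by_cases hpos : ∃ u, 0 ≤ u ∧ 0 < l u
    · obtain ⟨u, hu, hlu⟩ := hpos
      exact ⟨p, p - l, hp.isRieszHom hG hw hlw,
        hp.neg.isRieszHom hG' hu (by simpa using hlu), rfl⟩
    · push Not at hpos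
      have hl : IsPositive (-l) := fun x hx => by simpa using hpos x hx
      have hq : p - l = -l := hp.neg.eq_of_isPositive hl
      obtain ⟨f, g, hf, hg, hfg⟩ := hl.exists_isRieszHom_add hG'
      exact ⟨f, g, hf, hg, by rw [hq, sub_eq_neg_self.mp hq, zero_add, hfg]⟩
  · push Not at hneg
    obtain ⟨f, g, hf, hg, hfg⟩ := IsPositive.exists_isRieszHom_add hneg hG
    exact ⟨f, g, hf, hg, by rw [hp.eq_of_isPositive hneg, sub_self, add_zero, hfg]⟩

theorem IsPosPartOf.isGrothendieckSubspace_ker (hp : IsPosPartOf l p) {f g : E →ₗ[ℝ] ℝ}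
    (hf : IsRieszHom f) (hg : IsRieszHom g) (hfg : p + (p - l) = f + g) :
    IsGrothendieckSubspace (LinearMap.ker l) := by
  obtain ⟨c, hc⟩ := (Submodule.mem_span_range_iff_exists_fun ℝ).mp
    (mem_span_of_iInf_ker_le_ker (L := fun b => cond b f g) (K := l)
      (by simpa [iInf_bool_eq] using hp.ker_inf_ker_le_ker hf hg hfg))
  rw [Fintype.sum_bool, cond_true, cond_false] at hc
  exact hc ▸ hf.isGrothendieckSubspace_ker_smul_add_smul hg _ _

end Kernel

theorem ker_grothendieck_iff_modulus_two_disjoint (l p : X →ₗ[ℝ] ℝ)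
    (hp : IsPosPartOf l p) :
    IsGrothendieckSubspace (LinearMap.ker l) ↔
      ∃ f g : X →ₗ[ℝ] ℝ, IsRieszHom f ∧ IsRieszHom g ∧ p + (p - l) = f + g :=
  ⟨hp.exists_isRieszHom_of_isGrothendieckSubspace,
    fun ⟨_, _, hf, hg, hfg⟩ => hp.isGrothendieckSubspace_ker hf hg hfg⟩
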